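/- Let m ≥ 2 and let η = (η_1, …, η_m) ∈ (ℝ²)^m be such that M := max_i |η_i| > ρ. Then for every index i with |η_i| = M, the inner product ⟨η_i, −f̄(η_i) + Σ_{j≠i} γ̄_ij(η_j − η_i)⟩ ≤ −κ(M)·M, and this quantity is strictly negative. -/

import Mathlib

/-!
In polar coordinates `v = r (cos θ, sin θ)` one has
`⟪v, f̄ v⟫ = (1/2π) ∫₀^{2π} f(r cos ψ) (r sin ψ)² dψ`, which the substitution `u = r cos ψ` turns
into `κ(r) r`. For the coupling terms put `w = ηⱼ - ηᵢ` and `g(φ) = -w₀ sin φ + w₁ cos φ`: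
writing `ηᵢ` in the basis `w, w⊥` gives `|w|² ⟪ηᵢ, γ̄ w⟫ = ⟪ηᵢ, w⟫ · (1/2π) ∫ γ(g) g`, because the
`w⊥`-component contributes `∫ γ(g) g'`, the integral of an exact derivative over a period.
Since `γ(g) g ≥ 0` and `⟪ηᵢ, w⟫ ≤ 0` when `|ηᵢ|` is maximal, these terms are `≤ 0`.

Finally `κ(s) = (2/π) ∫₀^{π/2} F(s sin θ) sin θ dθ` (substitution `σ = s sin θ` and integration
by parts). Split `F = F(min(·, s₀)) + F(max(·, s₀))`: the second part of the integral is
nondecreasing in `s` by monotonicity of `F` beyond `s₀`, and for `s > s₀` the first part equals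
`∫₀^{s₀} F(u) u / (s √(s² - u²)) du`, which is strictly increasing in `s` because `F < 0` on
`(0, s₀)`. Hence `κ(ρ) = 0` and `ρ < M` force `κ(M) > 0`.
-/

open Real Set Filter MeasureTheory
open scoped RealInnerProductSpace

noncomputable section

/-- The plane `ℝ²` with the Euclidean norm. -/
abbrev E2 : Type := EuclideanSpace ℝ (Fin 2)

/-- The vector `(a, b) ∈ ℝ²`. -/
def vec2 (a b : ℝ) : E2 := !₂[a, b]

/-- `κ(s) = (2/π) ∫₀ˢ f(σ) √(1 - σ²/s²) dσ` (equal to `0` at `s = 0`). -/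
def kappa (f : ℝ → ℝ) (s : ℝ) : ℝ :=
  (2 / π) * ∫ σ in (0:ℝ)..s, f σ * Real.sqrt (1 - σ ^ 2 / s ^ 2)

/-- The average function `f̄` of `f`. -/
def fbar (f : ℝ → ℝ) (v : E2) : E2 :=
  (1 / (2 * π)) • ∫ φ in (0:ℝ)..(2 * π),
    (f (v 0 * Real.cos φ + v 1 * Real.sin φ) * (-(v 0) * Real.sin φ + v 1 * Real.cos φ)) •
      vec2 (-Real.sin φ) (Real.cos φ)

/-- The average function `γ̄` of a coupling function `γ`. -/
def gbar (γ : ℝ → ℝ) (v : E2) : E2 :=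
  (1 / (2 * π)) • ∫ φ in (0:ℝ)..(2 * π),
    γ (-(v 0) * Real.sin φ + v 1 * Real.cos φ) • vec2 (-Real.sin φ) (Real.cos φ)

/-- `ρ̄(s) = (1/2π) ∫₀^{2π} γ(s sin φ) sin φ dφ`. -/
def rhobar (γ : ℝ → ℝ) (s : ℝ) : ℝ :=
  (1 / (2 * π)) * ∫ φ in (0:ℝ)..(2 * π), γ (s * Real.sin φ) * Real.sin φ

/-- A class-K function: continuous on `[0, ∞)`, zero at zero, strictly increasing on `[0, ∞)`. -/
def ClassK (α : ℝ → ℝ) : Prop :=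
  ContinuousOn α (Set.Ici 0) ∧ α 0 = 0 ∧ StrictMonoOn α (Set.Ici 0)

/-- Condition (L2) for a function `F` with crossing point `s₀ > 0`: `F(s₀) = 0`,
`F` negative on `(0, s₀)`, and `F` positive, nondecreasing and unbounded on `(s₀, ∞)`. -/
def CondL2 (F : ℝ → ℝ) (s₀ : ℝ) : Prop :=
  0 < s₀ ∧ F s₀ = 0 ∧ (∀ s ∈ Set.Ioo (0:ℝ) s₀, F s < 0) ∧
    (∀ s ∈ Set.Ioi s₀, 0 < F s) ∧ MonotoneOn F (Set.Ioi s₀) ∧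
    Filter.Tendsto F Filter.atTop Filter.atTop

/-- The state space `(ℝ²)^m` with the Euclidean norm of `ℝ^{2m}`. -/
abbrev St (m : ℕ) : Type := PiLp 2 (fun _ : Fin m => E2)

lemma inner_vec2 (u : E2) (a b : ℝ) : ⟪u, vec2 a b⟫ = u 0 * a + u 1 * b := by
  simp [vec2, PiLp.inner_apply, Fin.sum_univ_two]; ring

lemma inner_eq_coords (u w : E2) : ⟪u, w⟫ = u 0 * w 0 + u 1 * w 1 := by
  simp [PiLp.inner_apply, Fin.sum_univ_two]; ring

lemma norm_sq_eq_coords (u : E2) : ‖u‖ ^ 2 = u 0 ^ 2 + u 1 ^ 2 := by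
  rw [← real_inner_self_eq_norm_sq, inner_eq_coords]; ring

lemma exists_polar (v : E2) : ∃ θ : ℝ, v 0 = ‖v‖ * cos θ ∧ v 1 = ‖v‖ * sin θ := by
  have hnorm : ‖(⟨v 0, v 1⟩ : ℂ)‖ = ‖v‖ := by
    rw [Complex.norm_def, Complex.normSq_mk, ← sq_eq_sq₀ (sqrt_nonneg _) (norm_nonneg v),
      sq_sqrt (by nlinarith [sq_nonneg (v 0), sq_nonneg (v 1)]), norm_sq_eq_coords]
    ring
  refine ⟨Complex.arg ⟨v 0, v 1⟩, ?_, ?_⟩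
  · rw [← hnorm, Complex.norm_mul_cos_arg]
  · rw [← hnorm, Complex.norm_mul_sin_arg]

lemma inner_intervalIntegral_smul_vec2 (u : E2) {k : ℝ → ℝ} (hk : Continuous k) (a b : ℝ) :
    ⟪u, ∫ φ in a..b, k φ • vec2 (-sin φ) (cos φ)⟫ =
      ∫ φ in a..b, k φ * (-(u 0) * sin φ + u 1 * cos φ) := by
  have hint : IntervalIntegrable (fun φ => k φ • vec2 (-sin φ) (cos φ)) volume a b := by
    refine (hk.smul ?_).intervalIntegrable a b
    simp only [vec2]
    fun_prop
  rw [← innerSL_apply_apply ℝ, ← (innerSL ℝ u).intervalIntegral_comp_comm hint]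
  simp only [innerSL_apply_apply, real_inner_smul_right, inner_vec2]
  congr 1; ext φ; ring

lemma integral_neg_eq_two_mul_of_even {g : ℝ → ℝ} (hg : Continuous g)
    (heven : ∀ x, g (-x) = g x) (a : ℝ) :
    ∫ x in -a..a, g x = 2 * ∫ x in 0..a, g x := by
  have hleft : ∫ x in -a..0, g x = ∫ x in 0..a, g x := by
    simpa [heven] using (intervalIntegral.integral_comp_neg (a := 0) (b := a) g).symm
  rw [← intervalIntegral.integral_add_adjacent_intervals (b := 0)
    (hg.intervalIntegrable _ _) (hg.intervalIntegrable _ _), hleft]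
  ring

lemma integral_comp_sub_of_periodic {g : ℝ → ℝ} (hg : Function.Periodic g (2 * π)) (θ : ℝ) :
    ∫ φ in 0..2 * π, g (φ - θ) = ∫ ψ in -π..π, g ψ := by
  rw [intervalIntegral.integral_comp_sub_right, zero_sub]
  convert hg.intervalIntegral_add_eq (-θ) (-π) using 2 <;> ring

lemma integral_comp_mul_cos_mul_sin_sq {f : ℝ → ℝ} (hf : Continuous f) {r : ℝ} (hr : 0 < r) :
    ∫ ψ in 0..π, f (r * cos ψ) * (r * sin ψ) ^ 2 =
      ∫ u in -r..r, f u * sqrt (1 - u ^ 2 / r ^ 2) * r := by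
  have hsubst := intervalIntegral.integral_comp_mul_deriv (a := 0) (b := π)
    (f := fun ψ => r * cos ψ) (f' := fun ψ => -(r * sin ψ))
    (g := fun u => f u * sqrt (1 - u ^ 2 / r ^ 2) * r)
    (fun ψ _ => by simpa using (hasDerivAt_cos ψ).const_mul r) (by fun_prop) (by fun_prop)
  simp only [cos_zero, cos_pi, mul_one, mul_neg_one, Function.comp_def] at hsubst
  rw [intervalIntegral.integral_symm r, ← hsubst, ← intervalIntegral.integral_neg]
  refine intervalIntegral.integral_congr fun ψ hψ => ?_
  rw [uIcc_of_le pi_pos.le] at hψ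
  have hsqrt : sqrt (1 - (r * cos ψ) ^ 2 / r ^ 2) = sin ψ := by
    rw [← cos_sq_add_sin_sq ψ, mul_pow, mul_div_cancel_left₀ _ (by positivity), add_sub_cancel_left,
      sqrt_sq (sin_nonneg_of_nonneg_of_le_pi hψ.1 hψ.2)]
  simp only [hsqrt]
  ring

lemma inner_fbar_self {f : ℝ → ℝ} (hf : Continuous f) (heven : ∀ s, f (-s) = f s) (v : E2) :
    ⟪v, fbar f v⟫ = kappa f ‖v‖ * ‖v‖ := by
  rcases eq_or_ne v 0 with rfl | hv
  · simp
  obtain ⟨θ, hv0, hv1⟩ := exists_polar v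
  set r := ‖v‖
  have hr : 0 < r := norm_pos_iff.mpr hv
  have hpolar : ∀ φ, f (v 0 * cos φ + v 1 * sin φ) * (-(v 0) * sin φ + v 1 * cos φ) *
      (-(v 0) * sin φ + v 1 * cos φ) = f (r * cos (φ - θ)) * (r * sin (φ - θ)) ^ 2 := by
    intro φ
    rw [hv0, hv1, cos_sub, sin_sub]
    ring_nf
  have hperiodic : Function.Periodic (fun ψ => f (r * cos ψ) * (r * sin ψ) ^ 2) (2 * π) := by
    intro ψ
    simp only [cos_add_two_pi, sin_add_two_pi]
  rw [fbar, real_inner_smul_right, inner_intervalIntegral_smul_vec2 v (by fun_prop),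
    intervalIntegral.integral_congr fun φ _ => hpolar φ,
    integral_comp_sub_of_periodic hperiodic,
    integral_neg_eq_two_mul_of_even (by fun_prop) (fun ψ => by simp only [cos_neg, sin_neg]; ring),
    integral_comp_mul_cos_mul_sin_sq hf hr,
    integral_neg_eq_two_mul_of_even (by fun_prop) (fun u => by simp only [heven, neg_sq]),
    intervalIntegral.integral_mul_const, kappa]
  field_simp

lemma integral_comp_trig_mul_deriv_eq_zero {γ : ℝ → ℝ} (hγ : Continuous γ) (w : E2) :
    ∫ φ in 0..2 * π, γ (-(w 0) * sin φ + w 1 * cos φ) * (w 0 * cos φ + w 1 * sin φ) = 0 := by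
  have hsubst := intervalIntegral.integral_comp_mul_deriv (a := 0) (b := 2 * π) (g := γ)
    (f := fun φ => -(w 0) * sin φ + w 1 * cos φ)
    (f' := fun φ => -(w 0 * cos φ + w 1 * sin φ))
    (fun φ _ => (((hasDerivAt_sin φ).const_mul (-(w 0))).add
      ((hasDerivAt_cos φ).const_mul (w 1))).congr_deriv (by ring))
    (by fun_prop) hγ
  simpa only [sin_two_pi, cos_two_pi, sin_zero, cos_zero, intervalIntegral.integral_same,
    Function.comp_def, mul_neg, intervalIntegral.integral_neg, neg_eq_zero] using hsubst

lemma inner_gbar_nonpos {γ : ℝ → ℝ} (hγ : Continuous γ) (hγ0 : γ 0 = 0)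
    (hsign : ∀ s, 0 ≤ s * γ s) {u w : E2} (huw : ⟪u, w⟫ ≤ 0) : ⟪u, gbar γ w⟫ ≤ 0 := by
  rcases eq_or_ne w 0 with rfl | hw
  · simp [gbar, hγ0]
  set g : ℝ → ℝ := fun φ => -(w 0) * sin φ + w 1 * cos φ
  have hdecomp : ∀ φ, ‖w‖ ^ 2 * (γ (g φ) * (-(u 0) * sin φ + u 1 * cos φ)) =
      ⟪u, w⟫ * (γ (g φ) * g φ) +
        (u 1 * w 0 - u 0 * w 1) * (γ (g φ) * (w 0 * cos φ + w 1 * sin φ)) := by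
    intro φ
    rw [norm_sq_eq_coords, inner_eq_coords]
    ring
  have hself : 0 ≤ ∫ φ in 0..2 * π, γ (g φ) * g φ :=
    intervalIntegral.integral_nonneg (by positivity) fun φ _ => by
      simpa only [mul_comm] using hsign (g φ)
  have hscaled : ‖w‖ ^ 2 * ⟪u, gbar γ w⟫ =
      (1 / (2 * π)) * (⟪u, w⟫ * ∫ φ in 0..2 * π, γ (g φ) * g φ) := by
    rw [gbar, real_inner_smul_right, inner_intervalIntegral_smul_vec2 u (by fun_prop),
      mul_left_comm, ← intervalIntegral.integral_const_mul,
      intervalIntegral.integral_congr fun φ _ => hdecomp φ,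
      intervalIntegral.integral_add ?_ ?_,
      intervalIntegral.integral_const_mul, intervalIntegral.integral_const_mul,
      integral_comp_trig_mul_deriv_eq_zero hγ w, mul_zero, add_zero]
    all_goals exact Continuous.intervalIntegrable (by fun_prop) _ _
  have hw2 : 0 < ‖w‖ ^ 2 := by positivity
  have hscaled_nonpos : ‖w‖ ^ 2 * ⟪u, gbar γ w⟫ ≤ 0 := by
    rw [hscaled]
    exact mul_nonpos_of_nonneg_of_nonpos (by positivity) (mul_nonpos_of_nonpos_of_nonneg huw hself)
  exact nonpos_of_mul_nonpos_right hscaled_nonpos hw2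

def sinTransform (F : ℝ → ℝ) (s : ℝ) : ℝ := ∫ θ in 0..π / 2, F (s * sin θ) * sin θ

-- The right-hand side is shaped as `u * v'` for the integration by parts in `kappa_eq_sinTransform`.
lemma integral_sqrt_weight_eq_integral_cos_sq {f : ℝ → ℝ} (hf : Continuous f) {s : ℝ}
    (hs : s ≠ 0) :
    ∫ σ in 0..s, f σ * sqrt (1 - σ ^ 2 / s ^ 2) =
      ∫ θ in 0..π / 2, cos θ * (f (s * sin θ) * (s * cos θ)) := by
  have hsubst := intervalIntegral.integral_comp_mul_deriv (a := 0) (b := π / 2)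
    (f := fun θ => s * sin θ) (f' := fun θ => s * cos θ)
    (g := fun σ => f σ * sqrt (1 - σ ^ 2 / s ^ 2))
    (fun θ _ => (hasDerivAt_sin θ).const_mul s) (by fun_prop) (by fun_prop)
  simp only [sin_zero, sin_pi_div_two, mul_zero, mul_one, Function.comp_def] at hsubst
  rw [← hsubst]
  refine intervalIntegral.integral_congr fun θ hθ => ?_
  rw [uIcc_of_le (by positivity)] at hθ
  have hsqrt : sqrt (1 - (s * sin θ) ^ 2 / s ^ 2) = cos θ := by
    rw [← sin_sq_add_cos_sq θ, mul_pow, mul_div_cancel_left₀ _ (by positivity),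
      add_sub_cancel_left, sqrt_sq (cos_nonneg_of_mem_Icc ⟨by linarith [pi_pos, hθ.1], hθ.2⟩)]
  simp only [hsqrt]
  ring

lemma kappa_eq_sinTransform {f : ℝ → ℝ} (hf : Continuous f) (s : ℝ) :
    kappa f s = 2 / π * sinTransform (fun t => ∫ σ in 0..t, f σ) s := by
  rcases eq_or_ne s 0 with rfl | hs
  · simp [kappa, sinTransform]
  have hprim : ∀ θ, HasDerivAt (fun θ => ∫ σ in 0..s * sin θ, f σ)
      (f (s * sin θ) * (s * cos θ)) θ := fun θ =>
    (hf.integral_hasStrictDerivAt 0 _).hasDerivAt.comp θ ((hasDerivAt_sin θ).const_mul s)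
  have hparts := intervalIntegral.integral_mul_deriv_eq_deriv_mul (a := 0) (b := π / 2)
    (fun θ _ => hasDerivAt_cos θ) (fun θ _ => hprim θ)
    (Continuous.intervalIntegrable (by fun_prop) _ _)
    (Continuous.intervalIntegrable (by fun_prop) _ _)
  simp only [cos_pi_div_two, cos_zero, sin_zero, mul_zero, zero_mul,
    intervalIntegral.integral_same, neg_mul, intervalIntegral.integral_neg, neg_zero, zero_sub,
    neg_neg] at hparts
  rw [kappa, integral_sqrt_weight_eq_integral_cos_sq hf hs, hparts, sinTransform]
  simp only [mul_comm]

lemma mul_sin_le_iff_le_arcsin {a s θ : ℝ} (hs : 0 < s) (ha : 0 ≤ a) (has : a ≤ s)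
    (hθ : θ ∈ Icc (-(π / 2)) (π / 2)) : s * sin θ ≤ a ↔ θ ≤ arcsin (a / s) := by
  rw [le_arcsin_iff_sin_le hθ ⟨by linarith [div_nonneg ha hs.le], (div_le_one hs).mpr has⟩,
    le_div_iff₀ hs, mul_comm]

lemma le_mul_sin_iff_arcsin_le {a s θ : ℝ} (hs : 0 < s) (ha : 0 ≤ a) (has : a ≤ s)
    (hθ : θ ∈ Icc (-(π / 2)) (π / 2)) : a ≤ s * sin θ ↔ arcsin (a / s) ≤ θ := by
  rw [arcsin_le_iff_le_sin ⟨by linarith [div_nonneg ha hs.le], (div_le_one hs).mpr has⟩ hθ,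
    div_le_iff₀ hs, mul_comm]

lemma continuousOn_mul_div_mul_sqrt {F : ℝ → ℝ} (hFc : Continuous F) {a s : ℝ} (has : a < s) :
    ContinuousOn (fun u => F u * (u / (s * sqrt (s ^ 2 - u ^ 2)))) (Icc 0 a) := by
  refine hFc.continuousOn.mul (continuousOn_id.div (by fun_prop) fun u hu => ?_)
  have hs : 0 < s := hu.1.trans_lt (hu.2.trans_lt has)
  have : 0 < s ^ 2 - u ^ 2 := by nlinarith [hu.1, hu.2]
  positivity

lemma integral_comp_min_mul_sin {F : ℝ → ℝ} (hFc : Continuous F) {a s : ℝ} (ha : 0 < a)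
    (has : a < s) (hFa : F a = 0) :
    ∫ θ in 0..π / 2, F (min (s * sin θ) a) * sin θ =
      ∫ u in 0..a, F u * (u / (s * sqrt (s ^ 2 - u ^ 2))) := by
  have hs : 0 < s := ha.trans has
  set θa := arcsin (a / s)
  have hθa : 0 < θa := arcsin_pos.mpr (by positivity)
  have hθa' : θa < π / 2 := arcsin_lt_pi_div_two.mpr ((div_lt_one hs).mpr has)
  have hmemIcc : ∀ θ ∈ Icc 0 (π / 2), θ ∈ Icc (-(π / 2)) (π / 2) := fun θ hθ =>
    ⟨by linarith [hθ.1, pi_pos], hθ.2⟩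
  have hupper : ∫ θ in θa..π / 2, F (min (s * sin θ) a) * sin θ = 0 := by
    refine (intervalIntegral.integral_congr fun θ hθ => ?_).trans intervalIntegral.integral_zero
    rw [uIcc_of_le hθa'.le] at hθ
    have : a ≤ s * sin θ :=
      (le_mul_sin_iff_arcsin_le hs ha.le has.le (hmemIcc θ ⟨hθa.le.trans hθ.1, hθ.2⟩)).mpr hθ.1
    simp [min_eq_right this, hFa]
  have hlower : ∀ θ ∈ Icc 0 θa, 0 ≤ s * sin θ ∧ s * sin θ ≤ a := fun θ hθ =>
    ⟨mul_nonneg hs.le (sin_nonneg_of_nonneg_of_le_pi hθ.1 (by linarith [hθ.2, pi_pos])),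
      (mul_sin_le_iff_le_arcsin hs ha.le has.le (hmemIcc θ ⟨hθ.1, hθ.2.trans hθa'.le⟩)).mpr hθ.2⟩
  have hsubst := intervalIntegral.integral_comp_mul_deriv' (a := 0) (b := θa)
    (f := fun θ => s * sin θ) (f' := fun θ => s * cos θ)
    (fun θ _ => (hasDerivAt_sin θ).const_mul s) (by fun_prop)
    ((continuousOn_mul_div_mul_sqrt hFc has).mono (by
      rintro _ ⟨θ, hθ, rfl⟩
      rw [uIcc_of_le hθa.le] at hθ
      exact hlower θ hθ))
  have hend : s * sin θa = a := by
    rw [sin_arcsin (by linarith [div_pos ha hs]) ((div_le_one hs).mpr has.le),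
      mul_div_cancel₀ a hs.ne']
  simp only [sin_zero, mul_zero, Function.comp_def, hend] at hsubst
  rw [← intervalIntegral.integral_add_adjacent_intervals (b := θa)
    (Continuous.intervalIntegrable (by fun_prop) _ _)
    (Continuous.intervalIntegrable (by fun_prop) _ _), hupper, add_zero, ← hsubst]
  refine intervalIntegral.integral_congr fun θ hθ => ?_
  rw [uIcc_of_le hθa.le] at hθ
  have hcos : 0 < cos θ := cos_pos_of_mem_Ioo ⟨by linarith [hθ.1, pi_pos], by linarith [hθ.2]⟩
  have hsqrt : sqrt (s ^ 2 - (s * sin θ) ^ 2) = s * cos θ := by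
    rw [← sqrt_sq (by positivity : 0 ≤ s * cos θ)]
    congr 1
    nlinarith [sin_sq_add_cos_sq θ]
  simp only [min_eq_left (hlower θ hθ).2, hsqrt]
  field_simp

lemma div_mul_sqrt_sub_sq_lt {u ρ M : ℝ} (hu : 0 < u) (huρ : u < ρ) (hρM : ρ < M) :
    u / (M * sqrt (M ^ 2 - u ^ 2)) < u / (ρ * sqrt (ρ ^ 2 - u ^ 2)) := by
  have hρ : 0 < sqrt (ρ ^ 2 - u ^ 2) := sqrt_pos.mpr (by nlinarith)
  have hle : sqrt (ρ ^ 2 - u ^ 2) ≤ sqrt (M ^ 2 - u ^ 2) := sqrt_le_sqrt (by nlinarith)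
  exact div_lt_div_of_pos_left hu (mul_pos (hu.trans huρ) hρ) (mul_lt_mul hρM hle hρ (by linarith))

namespace CondL2

variable {F : ℝ → ℝ} {s₀ : ℝ}

lemma nonneg_of_le (hF : CondL2 F s₀) {x : ℝ} (hx : s₀ ≤ x) : 0 ≤ F x := by
  rcases hx.eq_or_lt with rfl | hlt
  · exact hF.2.1.ge
  · exact (hF.2.2.2.1 x hlt).le

lemma monotoneOn_Ici (hF : CondL2 F s₀) : MonotoneOn F (Ici s₀) := by
  intro x hx y hy hxy
  rcases (mem_Ici.mp hx).eq_or_lt with rfl | hx'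
  · rw [hF.2.1]
    exact hF.nonneg_of_le hy
  · exact hF.2.2.2.2.1 hx' (hx'.trans_le hxy) hxy

lemma apply_eq_min_add_max (hF : CondL2 F s₀) (x : ℝ) :
    F x = F (min x s₀) + F (max x s₀) := by
  rcases le_total x s₀ with h | h <;> simp [h, hF.2.1]

lemma sinTransform_neg (hF : CondL2 F s₀) (hFc : Continuous F) {s : ℝ} (hs : 0 < s)
    (hss₀ : s ≤ s₀) : sinTransform F s < 0 := by
  have hpos : 0 < ∫ θ in 0..π / 2, -(F (s * sin θ) * sin θ) := by
    refine intervalIntegral.intervalIntegral_pos_of_pos_on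
      (Continuous.intervalIntegrable (by fun_prop) _ _) (fun θ hθ => ?_) (by positivity)
    have hsin : 0 < sin θ := sin_pos_of_pos_of_lt_pi hθ.1 (by linarith [hθ.2, pi_pos])
    have hsin1 : sin θ < 1 := by
      rw [← sin_pi_div_two]
      exact sin_lt_sin_of_lt_of_le_pi_div_two (by linarith [hθ.1, pi_pos]) le_rfl hθ.2
    have hFneg : F (s * sin θ) < 0 :=
      hF.2.2.1 _ ⟨by positivity, by nlinarith⟩
    nlinarith
  rw [intervalIntegral.integral_neg] at hpos
  exact neg_pos.mp hpos

lemma integral_mul_div_mul_sqrt_lt (hF : CondL2 F s₀) (hFc : Continuous F) {ρ M : ℝ}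
    (hs₀ρ : s₀ < ρ) (hρM : ρ < M) :
    ∫ u in 0..s₀, F u * (u / (ρ * sqrt (ρ ^ 2 - u ^ 2))) <
      ∫ u in 0..s₀, F u * (u / (M * sqrt (M ^ 2 - u ^ 2))) := by
  have hs₀ : 0 < s₀ := hF.1
  refine intervalIntegral.integral_lt_integral_of_continuousOn_of_le_of_exists_lt hs₀
    (continuousOn_mul_div_mul_sqrt hFc hs₀ρ) (continuousOn_mul_div_mul_sqrt hFc (hs₀ρ.trans hρM))
    (fun u hu => ?_) ⟨s₀ / 2, ⟨by positivity, by linarith⟩, ?_⟩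
  · have hFu : F u ≤ 0 := by
      rcases hu.2.eq_or_lt with rfl | hlt
      · exact hF.2.1.le
      · exact (hF.2.2.1 u ⟨hu.1, hlt⟩).le
    exact mul_le_mul_of_nonpos_left
      (div_mul_sqrt_sub_sq_lt hu.1 (hu.2.trans_lt hs₀ρ) hρM).le hFu
  · exact mul_lt_mul_of_neg_left
      (div_mul_sqrt_sub_sq_lt (by positivity) (by linarith) hρM)
      (hF.2.2.1 _ ⟨by positivity, by linarith⟩)

lemma sinTransform_eq_add (hF : CondL2 F s₀) (hFc : Continuous F) (s : ℝ) :
    sinTransform F s = (∫ θ in 0..π / 2, F (min (s * sin θ) s₀) * sin θ) +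
      ∫ θ in 0..π / 2, F (max (s * sin θ) s₀) * sin θ := by
  rw [sinTransform, ← intervalIntegral.integral_add
    (Continuous.intervalIntegrable (by fun_prop) _ _)
    (Continuous.intervalIntegrable (by fun_prop) _ _)]
  simp only [← add_mul, ← hF.apply_eq_min_add_max]

lemma sinTransform_pos (hF : CondL2 F s₀) (hFc : Continuous F) {ρ M : ℝ} (hρ : 0 < ρ)
    (hρ0 : sinTransform F ρ = 0) (hρM : ρ < M) : 0 < sinTransform F M := by
  have hs₀ρ : s₀ < ρ := lt_of_not_ge fun h => (hF.sinTransform_neg hFc hρ h).ne hρ0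
  have hneg : ∫ θ in 0..π / 2, F (min (ρ * sin θ) s₀) * sin θ <
      ∫ θ in 0..π / 2, F (min (M * sin θ) s₀) * sin θ := by
    rw [integral_comp_min_mul_sin hFc hF.1 hs₀ρ hF.2.1,
      integral_comp_min_mul_sin hFc hF.1 (hs₀ρ.trans hρM) hF.2.1]
    exact hF.integral_mul_div_mul_sqrt_lt hFc hs₀ρ hρM
  have hpos : ∫ θ in 0..π / 2, F (max (ρ * sin θ) s₀) * sin θ ≤
      ∫ θ in 0..π / 2, F (max (M * sin θ) s₀) * sin θ := by
    refine intervalIntegral.integral_mono_on (by positivity)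
      (Continuous.intervalIntegrable (by fun_prop) _ _)
      (Continuous.intervalIntegrable (by fun_prop) _ _) fun θ hθ => ?_
    have hsin : 0 ≤ sin θ := sin_nonneg_of_nonneg_of_le_pi hθ.1 (by linarith [hθ.2, pi_pos])
    refine mul_le_mul_of_nonneg_right (hF.monotoneOn_Ici (mem_Ici.mpr (le_max_right _ _))
      (mem_Ici.mpr (le_max_right _ _)) (max_le_max_right _ ?_)) hsin
    exact mul_le_mul_of_nonneg_right hρM.le hsin
  rw [hF.sinTransform_eq_add hFc] at hρ0 ⊢
  linarith

end CondL2

lemma kappa_pos_of_lt {f : ℝ → ℝ} (hf : Continuous f) {s₀ : ℝ}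
    (hF : CondL2 (fun s => ∫ σ in 0..s, f σ) s₀) {ρ M : ℝ} (hρ : 0 < ρ) (hκρ : kappa f ρ = 0)
    (hρM : ρ < M) : 0 < kappa f M := by
  rw [kappa_eq_sinTransform hf] at hκρ ⊢
  have hprim : Continuous fun s => ∫ σ in 0..s, f σ :=
    intervalIntegral.continuous_primitive (fun _ _ => hf.intervalIntegrable _ _) 0
  have hpos := hF.sinTransform_pos hprim hρ (by simpa [pi_pos.ne'] using hκρ) hρM
  positivity

lemma inner_sub_nonpos_of_norm_le {E : Type*} [NormedAddCommGroup E] [InnerProductSpace ℝ E]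
    {u w : E} (h : ‖w‖ ≤ ‖u‖) : ⟪u, w - u⟫ ≤ 0 := by
  rw [inner_sub_right, real_inner_self_eq_norm_sq]
  nlinarith [real_inner_le_norm u w, norm_nonneg u]

theorem lyapunov_decrease_general (m : ℕ)
    (f : ℝ → ℝ) (hflip : LocallyLipschitz f) (hfe : ∀ s : ℝ, f (-s) = f s)
    (s₀ : ℝ) (hF : CondL2 (fun s => ∫ σ in (0:ℝ)..s, f σ) s₀)
    (ρ : ℝ) (hρ : 0 < ρ) (hκρ : kappa f ρ = 0)
    (γ : Fin m → Fin m → ℝ → ℝ)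
    (hγlip : ∀ i j, i ≠ j → LocallyLipschitz (γ i j))
    (hG1 : ∀ i j, i ≠ j → γ i j 0 = 0 ∧ ∀ s : ℝ, 0 ≤ s * γ i j s)
    (η : Fin m → E2) (M : ℝ) (hub : ∀ i, ‖η i‖ ≤ M) (hMρ : ρ < M) :
    ∀ i, ‖η i‖ = M →
      ⟪η i, -fbar f (η i) + ∑ j ∈ Finset.univ.erase i, gbar (γ i j) (η j - η i)⟫ ≤
          -(kappa f M * M) ∧
      ⟪η i, -fbar f (η i) + ∑ j ∈ Finset.univ.erase i, gbar (γ i j) (η j - η i)⟫ < 0 := by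
  intro i hi
  have hκ : 0 < kappa f M := kappa_pos_of_lt hflip.continuous hF hρ hκρ hMρ
  have hcoupling : ⟪η i, ∑ j ∈ Finset.univ.erase i, gbar (γ i j) (η j - η i)⟫ ≤ 0 := by
    rw [inner_sum]
    refine Finset.sum_nonpos fun j hj => ?_
    have hij : i ≠ j := (Finset.ne_of_mem_erase hj).symm
    exact inner_gbar_nonpos (hγlip i j hij).continuous (hG1 i j hij).1 (hG1 i j hij).2
      (inner_sub_nonpos_of_norm_le ((hub j).trans hi.ge))
  have hbound : ⟪η i, -fbar f (η i) + ∑ j ∈ Finset.univ.erase i, gbar (γ i j) (η j - η i)⟫ ≤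
      -(kappa f M * M) := by
    rw [inner_add_right, inner_neg_right, inner_fbar_self hflip.continuous hfe, hi]
    linarith
  exact ⟨hbound, hbound.trans_lt (neg_neg_of_pos (mul_pos hκ (hρ.trans hMρ)))⟩

/-- if `M = maxᵢ |ηᵢ| > ρ` then for every `i` with `|ηᵢ| = M`,
`⟪ηᵢ, -f̄(ηᵢ) + Σ_{j≠i} γ̄ᵢⱼ(ηⱼ - ηᵢ)⟫ ≤ -κ(M)·M < 0`. -/
theorem lyapunov_decrease (m : ℕ) (hm : 2 ≤ m)
    (f : ℝ → ℝ) (hflip : LocallyLipschitz f) (hfe : ∀ s : ℝ, f (-s) = f s)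
    (s₀ : ℝ) (hF : CondL2 (fun s => ∫ σ in (0:ℝ)..s, f σ) s₀)
    (ρ : ℝ) (hρ : 0 < ρ) (hκρ : kappa f ρ = 0)
    (γ : Fin m → Fin m → ℝ → ℝ)
    (hγlip : ∀ i j, i ≠ j → LocallyLipschitz (γ i j))
    (hG1 : ∀ i j, i ≠ j → γ i j 0 = 0 ∧ ∀ s : ℝ, 0 ≤ s * γ i j s)
    (hG2 : ∀ i j, i ≠ j →
      (∀ s : ℝ, γ i j s = 0) ∨ ∃ α, ClassK α ∧ ∀ s : ℝ, α |s| ≤ |γ i j s|)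
    (η : Fin m → E2) (M : ℝ) (hub : ∀ i, ‖η i‖ ≤ M) (hex : ∃ i, ‖η i‖ = M) (hMρ : ρ < M) :
    ∀ i, ‖η i‖ = M →
      ⟪η i, -fbar f (η i) + ∑ j ∈ Finset.univ.erase i, gbar (γ i j) (η j - η i)⟫ ≤
          -(kappa f M * M) ∧
      ⟪η i, -fbar f (η i) + ∑ j ∈ Finset.univ.erase i, gbar (γ i j) (η j - η i)⟫ < 0 :=
  lyapunov_decrease_general m f hflip hfe s₀ hF ρ hρ hκρ γ hγlip hG1 η M hub hMρ
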